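/- Let N ≥ 2 and let c = (12·(N−1)·(N+1))^(−1/4). Define f : EuclideanSpace ℝ (Fin N) → ℝ by f(y) = c·‖y‖. Then for every β ∈ ℝ and every y ≠ 0, f(y)²·Δ²(f³)(y) − β·⟨y, ∇f(y)⟩ + ((4β − 1)/4)·f(y) = 0. In particular, for every β the profile equation f²Δ²f³ − β y·∇f + ((4β−1)/4) f = 0 admits a positive, unbounded solution on ℝ^N \ {0}. -/

import Mathlib

/-!
Away from the origin, `Δ ‖y‖ ^ p = p (p + N - 2) ‖y‖ ^ (p - 2)`; taking `p = 3` and then `p = 1`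
gives `Δ² ‖y‖³ = 3 (N + 1) (N - 1) / ‖y‖`, while Euler's relation for the homogeneous function `f`
gives `⟨y, ∇f(y)⟩ = f(y)`. The left-hand side of the profile equation is therefore
`c ‖y‖ (3 c⁴ (N² - 1) - 1/4)`, and the choice of `c` makes the bracket vanish.
-/

open RealInnerProductSpace

/-- The Laplacian `Δu(x) = ∑ i, ∂²u/∂xᵢ²(x)` of `u : ℝ^N → ℝ`. -/
noncomputable def lap {N : ℕ} (u : EuclideanSpace ℝ (Fin N) → ℝ)
    (x : EuclideanSpace ℝ (Fin N)) : ℝ :=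
  ∑ i : Fin N, fderiv ℝ (fun y => fderiv ℝ u y (EuclideanSpace.single i 1)) x
    (EuclideanSpace.single i 1)

open Topology

section RadialFunctions

variable {E : Type*} [NormedAddCommGroup E] [InnerProductSpace ℝ E] {x : E}

theorem hasFDerivAt_norm_rpow_of_ne_zero (hx : x ≠ 0) (p : ℝ) :
    HasFDerivAt (fun z : E ↦ ‖z‖ ^ p) ((p * ‖x‖ ^ (p - 2)) • innerSL ℝ x) x := by
  convert! ((hasStrictFDerivAt_norm_sq x).rpow_const (p := p / 2) (by simp [hx])).hasFDerivAt
    using 0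
  simp_rw [← Real.rpow_natCast_mul (norm_nonneg _), ← Nat.cast_smul_eq_nsmul ℝ, smul_smul]
  ring_nf

theorem fderiv_norm_rpow_apply (hx : x ≠ 0) (p : ℝ) (v : E) :
    fderiv ℝ (fun z : E ↦ ‖z‖ ^ p) x v = p * ‖x‖ ^ (p - 2) * ⟪x, v⟫ := by
  simp [(hasFDerivAt_norm_rpow_of_ne_zero hx p).fderiv]

theorem fderiv_fderiv_norm_rpow_apply (hx : x ≠ 0) (p : ℝ) (v w : E) :
    fderiv ℝ (fun z ↦ fderiv ℝ (fun z : E ↦ ‖z‖ ^ p) z v) x w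
      = p * ((p - 2) * ‖x‖ ^ (p - 4) * ⟪x, v⟫ * ⟪x, w⟫ + ‖x‖ ^ (p - 2) * ⟪v, w⟫) := by
  have hev : (fun z ↦ fderiv ℝ (fun z : E ↦ ‖z‖ ^ p) z v)
      =ᶠ[𝓝 x] fun z ↦ p * (‖z‖ ^ (p - 2) * ⟪z, v⟫) := by
    filter_upwards [isOpen_compl_singleton.mem_nhds hx] with z hz
    rw [fderiv_norm_rpow_apply hz p v, mul_assoc]
  have hinner : HasFDerivAt (fun z : E ↦ ⟪z, v⟫) (innerSL ℝ v) x := by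
    convert (innerSL ℝ v).hasFDerivAt using 1
    ext z
    simp [real_inner_comm]
  rw [hev.fderiv_eq,
    (((hasFDerivAt_norm_rpow_of_ne_zero hx (p - 2)).fun_mul hinner).const_mul p).fderiv,
    show p - 2 - 2 = p - 4 by ring]
  simp only [add_apply, smul_apply, innerSL_apply_apply, smul_eq_mul]
  ring

theorem inner_gradient_const_mul_norm [CompleteSpace E] (hx : x ≠ 0) (c : ℝ) :
    ⟪x, gradient (fun z : E ↦ c * ‖z‖) x⟫ = c * ‖x‖ := by
  rw [inner_gradient_right, conj_trivial, show (fun z : E ↦ c * ‖z‖) = c • (‖·‖) from rfl,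
    fderiv_const_smul_field, Pi.smul_apply, smul_apply,
    ((contDiffAt_norm ℝ hx).differentiableAt one_ne_zero (n := 1)).fderiv_norm_self, smul_eq_mul]

theorem not_bddAbove_range_const_mul_norm {F : Type*} [NormedAddCommGroup F] [NormedSpace ℝ F]
    [Nontrivial F] {c : ℝ} (hc : 0 < c) : ¬BddAbove (Set.range fun z : F ↦ c * ‖z‖) := by
  rw [not_bddAbove_iff]
  intro M
  obtain ⟨z, hz⟩ := NormedSpace.exists_lt_norm ℝ F (M / c)
  exact ⟨_, ⟨z, rfl⟩, (div_lt_iff₀' hc).mp hz⟩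

end RadialFunctions

section Laplacian

variable {N : ℕ}

theorem Filter.EventuallyEq.lap_eq {u v : EuclideanSpace ℝ (Fin N) → ℝ}
    {y : EuclideanSpace ℝ (Fin N)} (h : u =ᶠ[𝓝 y] v) : lap u y = lap v y := by
  refine Finset.sum_congr rfl fun i _ ↦ ?_
  have h' : (fun z ↦ fderiv ℝ u z (EuclideanSpace.single i 1))
      =ᶠ[𝓝 y] fun z ↦ fderiv ℝ v z (EuclideanSpace.single i 1) := by
    filter_upwards [h.fderiv (𝕜 := ℝ)] with z hz
    rw [hz]
  rw [h'.fderiv_eq]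

theorem lap_const_mul (a : ℝ) (u : EuclideanSpace ℝ (Fin N) → ℝ) :
    lap (fun z ↦ a * u z) = fun y ↦ a * lap u y := by
  have hu : fderiv ℝ (fun z ↦ a * u z) = a • fderiv ℝ u := fderiv_const_smul_field a
  funext y
  simp only [lap, hu, Finset.mul_sum, Pi.smul_apply, smul_apply]
  refine Finset.sum_congr rfl fun i _ ↦ ?_
  rw [show (fun z ↦ a • fderiv ℝ u z (EuclideanSpace.single i 1))
    = a • fun z ↦ fderiv ℝ u z (EuclideanSpace.single i 1) from rfl, fderiv_const_smul_field]
  rfl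

theorem lap_norm_rpow {y : EuclideanSpace ℝ (Fin N)} (hy : y ≠ 0) (p : ℝ) :
    lap (fun z ↦ ‖z‖ ^ p) y = p * (p + N - 2) * ‖y‖ ^ (p - 2) := by
  have hsq := (EuclideanSpace.basisFun (Fin N) ℝ).sum_sq_inner_left y
  simp only [EuclideanSpace.basisFun_apply] at hsq
  have hpow : ‖y‖ ^ (p - 4) * ‖y‖ ^ 2 = ‖y‖ ^ (p - 2) := by
    rw [← Real.rpow_natCast, ← Real.rpow_add (norm_pos_iff.mpr hy)]
    congr 1
    push_cast
    ring
  simp only [lap, fderiv_fderiv_norm_rpow_apply hy, real_inner_self_eq_norm_sq,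
    PiLp.norm_single, norm_one, one_pow, mul_one]
  calc ∑ i : Fin N, p * ((p - 2) * ‖y‖ ^ (p - 4) * ⟪y, EuclideanSpace.single i 1⟫
          * ⟪y, EuclideanSpace.single i 1⟫ + ‖y‖ ^ (p - 2))
      = ∑ i : Fin N, (p * (p - 2) * ‖y‖ ^ (p - 4) * ⟪y, EuclideanSpace.single i 1⟫ ^ 2
          + p * ‖y‖ ^ (p - 2)) := by
        congr! 1 with i
        ring
    _ = p * (p - 2) * (‖y‖ ^ (p - 4) * ‖y‖ ^ 2) + N * (p * ‖y‖ ^ (p - 2)) := by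
        rw [Finset.sum_add_distrib, ← Finset.mul_sum, hsq]
        simp only [Finset.sum_const, Finset.card_univ, Fintype.card_fin, nsmul_eq_mul]
        ring
    _ = p * (p + N - 2) * ‖y‖ ^ (p - 2) := by
        rw [hpow]
        ring

theorem lap_lap_norm_pow_three {y : EuclideanSpace ℝ (Fin N)} (hy : y ≠ 0) :
    lap (lap fun z ↦ ‖z‖ ^ 3) y = 3 * (N + 1) * (N - 1) / ‖y‖ := by
  have hlap : lap (fun z ↦ ‖z‖ ^ 3) =ᶠ[𝓝 y] fun z ↦ 3 * (N + 1) * ‖z‖ := by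
    filter_upwards [isOpen_compl_singleton.mem_nhds hy] with z hz
    have := lap_norm_rpow hz 3
    norm_num at this
    rw [this]
    ring
  have hlap_norm : lap (fun z ↦ ‖z‖) y = (N - 1) / ‖y‖ := by
    have := lap_norm_rpow hy 1
    norm_num [Real.rpow_neg_one] at this
    rw [this]
    ring
  simp only [hlap.lap_eq, lap_const_mul, hlap_norm]
  ring

end Laplacian

theorem stmt_8 (N : ℕ) (hN : 2 ≤ N) (c : ℝ)
    (hc : c = (12 * ((N : ℝ) - 1) * ((N : ℝ) + 1)) ^ (-(1 / 4) : ℝ))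
    (f : EuclideanSpace ℝ (Fin N) → ℝ) (hf : f = fun y => c * ‖y‖) :
    (∀ (β : ℝ) (y : EuclideanSpace ℝ (Fin N)), y ≠ 0 →
      f y ^ 2 * lap (lap (fun z => f z ^ 3)) y - β * ⟪y, gradient f y⟫
        + ((4 * β - 1) / 4) * f y = 0) ∧
    (∀ y : EuclideanSpace ℝ (Fin N), y ≠ 0 → 0 < f y) ∧
    ¬ BddAbove (Set.range f) := by
  subst hf
  have hb : 0 < 12 * ((N : ℝ) - 1) * ((N : ℝ) + 1) := by
    have : (2 : ℝ) ≤ N := by exact_mod_cast hN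
    nlinarith
  have hc0 : 0 < c := hc ▸ Real.rpow_pos_of_pos hb _
  have hc4 : c ^ 4 * (12 * ((N : ℝ) - 1) * ((N : ℝ) + 1)) = 1 := by
    rw [hc, ← Real.rpow_natCast, ← Real.rpow_mul hb.le,
      show -(1 / 4 : ℝ) * ((4 : ℕ) : ℝ) = -1 by norm_num, Real.rpow_neg_one, inv_mul_cancel₀ hb.ne']
  have : Nonempty (Fin N) := ⟨⟨0, by omega⟩⟩
  refine ⟨fun β y hy ↦ ?_, fun y hy ↦ mul_pos hc0 (norm_pos_iff.mpr hy),
    not_bddAbove_range_const_mul_norm hc0⟩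
  simp only [mul_pow, lap_const_mul, lap_lap_norm_pow_three hy, inner_gradient_const_mul_norm hy]
  have hy' : ‖y‖ ≠ 0 := norm_ne_zero_iff.mpr hy
  field_simp
  linear_combination (c * ‖y‖) * hc4
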